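/- In the two-star gadget instance, the shortest-path oblivious routing template has total reserved capacity cost n²(1 − 1/n) = n² − n, while the tree template consisting of the two stars and the bridge edge has cost at most 2 (reserving one unit on the bridge and on each star edge), so the ratio RND_SP/RND_TR is Ω(n²). -/

import Mathlib

open Finset

/-- The demand universe of the two-star gadget instance: the convex hull of the
`n²` unit demand matrices `D^{ij}` placing one unit of demand between `vᵢ` and
`v'ⱼ` (a matrix `D : Fin n → Fin n → ℝ` records the demand `D i j` between `vᵢ`
and `v'ⱼ`). -/
noncomputable def gadgetDemands (n : ℕ) : Set (Fin n → Fin n → ℝ) :=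
  convexHull ℝ {M | ∃ i j : Fin n,
    M = fun k l => if k = i ∧ l = j then (1 : ℝ) else 0}

/-- The cost of the shortest-path template on the two-star gadget: each demand
`vᵢ v'ⱼ` is routed on the direct edge of cost `1 − 1/n`, whose required capacity
is the maximum of `D i j` over the demand universe. -/
noncomputable def spCost (n : ℕ) : ℝ :=
  ∑ i : Fin n, ∑ j : Fin n,
    (1 - 1 / (n : ℝ)) * sSup {x | ∃ D ∈ gadgetDemands n, x = D i j}

/-- The cost of the tree template consisting of the two stars and the bridge:
the bridge edge `ab` has cost `1`, each star edge has cost `1/(2n)`, and the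
required capacity of each tree edge is the maximum total demand routed through
it over the demand universe. -/
noncomputable def trCost (n : ℕ) : ℝ :=
  1 * sSup {x | ∃ D ∈ gadgetDemands n, x = ∑ i : Fin n, ∑ j : Fin n, D i j}
  + ∑ i : Fin n, 1 / (2 * (n : ℝ)) *
      sSup {x | ∃ D ∈ gadgetDemands n, x = ∑ j : Fin n, D i j}
  + ∑ j : Fin n, 1 / (2 * (n : ℝ)) *
      sSup {x | ∃ D ∈ gadgetDemands n, x = ∑ i : Fin n, D i j}

/-!
The load of an edge is a linear functional of the demand matrix, so its maximum over the
convex hull of the unit demands is attained at a unit demand. A unit demand loads any edge by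
at most one, and loads by exactly one its own direct edge and every tree edge it crosses. Hence
every reserved capacity is `1`, so `spCost n = n² (1 − 1/n)` and
`trCost n = 1 + n · 1/(2n) + n · 1/(2n) = 2`.
-/

theorem IsGreatest.image_convexHull {E : Type*} [AddCommGroup E] [Module ℝ E]
    {f : E →ₗ[ℝ] ℝ} {s : Set E} {c : ℝ} (h : IsGreatest (f '' s) c) :
    IsGreatest (f '' convexHull ℝ s) c := by
  refine ⟨Set.image_mono (subset_convexHull ℝ s) h.1, ?_⟩
  rintro _ ⟨x, hx, rfl⟩
  exact convexHull_min (fun y hy => h.2 (Set.mem_image_of_mem f hy))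
    (convex_halfSpace_le f.isLinear c) hx

namespace Gadget

variable {n : ℕ}

def unitDemand (i j : Fin n) : Fin n → Fin n → ℝ :=
  fun k l => if k = i ∧ l = j then 1 else 0

def pairSum (P : Finset (Fin n × Fin n)) : (Fin n → Fin n → ℝ) →ₗ[ℝ] ℝ where
  toFun D := ∑ p ∈ P, D p.1 p.2
  map_add' D D' := Finset.sum_add_distrib
  map_smul' a D := by simp [Finset.mul_sum]

theorem pairSum_unitDemand (P : Finset (Fin n × Fin n)) (i j : Fin n) :
    pairSum P (unitDemand i j) = if (i, j) ∈ P then 1 else 0 := by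
  have hpair (p : Fin n × Fin n) : (p.1 = i ∧ p.2 = j) ↔ p = (i, j) :=
    (Prod.ext_iff (y := (i, j))).symm
  simp only [pairSum, unitDemand, LinearMap.coe_mk, AddHom.coe_mk, hpair]
  exact Finset.sum_ite_eq' P (i, j) fun _ => (1 : ℝ)

/-- `∑ p ∈ P, D p.1 p.2` is the load of an edge crossed by exactly the demand pairs in `P`. -/
theorem sSup_pairSum_gadgetDemands {P : Finset (Fin n × Fin n)} (hP : P.Nonempty) :
    sSup {x | ∃ D ∈ gadgetDemands n, x = ∑ p ∈ P, D p.1 p.2} = 1 := by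
  have hunits : IsGreatest (pairSum P '' {M | ∃ i j, M = unitDemand i j}) 1 := by
    obtain ⟨⟨i, j⟩, hij⟩ := hP
    refine ⟨⟨unitDemand i j, ⟨i, j, rfl⟩, by simp [pairSum_unitDemand, hij]⟩, ?_⟩
    rintro _ ⟨_, ⟨k, l, rfl⟩, rfl⟩
    rw [pairSum_unitDemand]
    split_ifs <;> norm_num
  have himage : {x | ∃ D ∈ gadgetDemands n, x = ∑ p ∈ P, D p.1 p.2} =
      pairSum P '' gadgetDemands n := by
    ext
    simp [pairSum, eq_comm]
  rw [himage]
  exact hunits.image_convexHull.csSup_eq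

theorem sSup_entry_gadgetDemands (i j : Fin n) :
    sSup {x | ∃ D ∈ gadgetDemands n, x = D i j} = 1 := by
  simpa using sSup_pairSum_gadgetDemands (singleton_nonempty (i, j))

variable [NeZero n]

theorem sSup_rowSum_gadgetDemands (i : Fin n) :
    sSup {x | ∃ D ∈ gadgetDemands n, x = ∑ j : Fin n, D i j} = 1 := by
  simpa [Finset.sum_product] using
    sSup_pairSum_gadgetDemands ((singleton_nonempty i).product univ_nonempty)

theorem sSup_colSum_gadgetDemands (j : Fin n) :
    sSup {x | ∃ D ∈ gadgetDemands n, x = ∑ i : Fin n, D i j} = 1 := by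
  simpa [Finset.sum_product] using
    sSup_pairSum_gadgetDemands (univ_nonempty.product (singleton_nonempty j))

theorem sSup_totalSum_gadgetDemands :
    sSup {x | ∃ D ∈ gadgetDemands n, x = ∑ i : Fin n, ∑ j : Fin n, D i j} = 1 := by
  simpa [Fintype.sum_prod_type] using
    sSup_pairSum_gadgetDemands (univ_nonempty (α := Fin n × Fin n))

end Gadget

open Gadget

theorem spCost_eq (n : ℕ) : spCost n = (n : ℝ) ^ 2 * (1 - 1 / (n : ℝ)) := by
  simp only [spCost, sSup_entry_gadgetDemands, mul_one, sum_const, card_univ,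
    Fintype.card_fin, nsmul_eq_mul]
  ring

theorem trCost_eq (n : ℕ) [NeZero n] : trCost n = 2 := by
  simp only [trCost, sSup_totalSum_gadgetDemands, sSup_rowSum_gadgetDemands,
    sSup_colSum_gadgetDemands, mul_one, sum_const, card_univ, Fintype.card_fin, nsmul_eq_mul]
  have : (n : ℝ) ≠ 0 := NeZero.ne _
  field_simp
  ring

/-- In the two-star gadget instance, the shortest-path template has total
reserved capacity cost `n²(1 − 1/n) = n² − n`, while the tree template has cost
at most `2`, so the ratio `RND_SP / RND_TR` is `Ω(n²)`. -/
theorem gadget_sp_vs_tree (n : ℕ) (hn : 2 ≤ n) :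
    spCost n = (n : ℝ) ^ 2 * (1 - 1 / (n : ℝ)) ∧
    spCost n = (n : ℝ) ^ 2 - (n : ℝ) ∧
    trCost n ≤ 2 ∧
    (n : ℝ) ^ 2 / 4 * trCost n ≤ spCost n := by
  have : NeZero n := ⟨by omega⟩
  have hn' : (2 : ℝ) ≤ n := by exact_mod_cast hn
  have hsp : spCost n = (n : ℝ) ^ 2 - n := by
    rw [spCost_eq]
    field_simp
  refine ⟨spCost_eq n, hsp, (trCost_eq n).le, ?_⟩
  rw [trCost_eq, hsp]
  nlinarith
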